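/- Let X be a geodesic metric space and p ∈ X. Define t_p(x,x') := d(p,x) + d(p,x') − 2·m_p(x,x'). Then t_p is a pseudometric on X, it satisfies t_p ≤ d, t_p(p,x) = d(p,x) for all x, and t_p is 0-hyperbolic (i.e., the metric space obtained by quotienting by t_p = 0 has hyperbolicity constant 0). -/
import Mathlib

open scoped unitInterval

/-- A geodesic metric space: any two points are joined by a constant-speed
length-minimizing geodesic. -/
def IsGeodesicSpace (X : Type*) [MetricSpace X] : Prop :=
  ∀ x y : X, ∃ γ : Path x y, ∀ s t : unitInterval, dist (γ s) (γ t) = |(s : ℝ) - (t : ℝ)| * dist x y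

/-- The minimum of `d(p,·)` along a path. -/
noncomputable def pathMin {X : Type*} [MetricSpace X] (p : X) {x x' : X} (γ : Path x x') : ℝ :=
  sInf (Set.range fun t => dist p (γ t))

/-- `m_p(x,x')`: the supremum over continuous paths from `x` to `x'` of the minimum of
`d(p,·)` along the path. -/
noncomputable def mFn {X : Type*} [MetricSpace X] (p x x' : X) : ℝ :=
  sSup {m | ∃ γ : Path x x', m = pathMin p γ}

section aux
variable {X : Type*} [MetricSpace X] (p : X)

lemma pathMin_eq {x x' : X} (γ : Path x x') :
    pathMin p γ = sInf (dist p '' Set.range γ) := by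
  rw [pathMin, ← Set.range_comp]; rfl

lemma pathMin_le {x x' : X} (γ : Path x x') (t : unitInterval) :
    pathMin p γ ≤ dist p (γ t) := by
  refine csInf_le ⟨0, ?_⟩ ⟨t, rfl⟩
  rintro _ ⟨s, rfl⟩; exact dist_nonneg

lemma pathMin_nonneg {x x' : X} (γ : Path x x') : 0 ≤ pathMin p γ := by
  refine le_csInf (Set.range_nonempty _) ?_
  rintro _ ⟨s, rfl⟩; exact dist_nonneg

lemma pathMin_le_left {x x' : X} (γ : Path x x') : pathMin p γ ≤ dist p x := by
  simpa [γ.source] using pathMin_le p γ 0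

lemma pathMin_le_right {x x' : X} (γ : Path x x') : pathMin p γ ≤ dist p x' := by
  simpa [γ.target] using pathMin_le p γ 1

lemma mSet_bddAbove (x x' : X) : BddAbove {m | ∃ γ : Path x x', m = pathMin p γ} := by
  refine ⟨dist p x, ?_⟩
  rintro _ ⟨γ, rfl⟩; exact pathMin_le_left p γ

lemma mFn_le_left (x x' : X) (hne : (Nonempty (Path x x'))) : mFn p x x' ≤ dist p x := by
  obtain ⟨γ⟩ := hne
  refine csSup_le ⟨_, γ, rfl⟩ ?_
  rintro _ ⟨γ', rfl⟩; exact pathMin_le_left p γ'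

lemma mFn_le_right (x x' : X) (hne : (Nonempty (Path x x'))) : mFn p x x' ≤ dist p x' := by
  obtain ⟨γ⟩ := hne
  refine csSup_le ⟨_, γ, rfl⟩ ?_
  rintro _ ⟨γ', rfl⟩; exact pathMin_le_right p γ'

lemma pathMin_le_mFn {x x' : X} (γ : Path x x') : pathMin p γ ≤ mFn p x x' :=
  le_csSup (mSet_bddAbove p x x') ⟨γ, rfl⟩

lemma mFn_symm (x x' : X) : mFn p x x' = mFn p x' x := by
  have key : ∀ (a b : X) (γ : Path a b), pathMin p γ.symm = pathMin p γ := by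
    intro a b γ
    rw [pathMin_eq, pathMin_eq, Path.symm_range]
  unfold mFn
  congr 1
  ext m
  constructor
  · rintro ⟨γ, rfl⟩; exact ⟨γ.symm, (key _ _ γ).symm⟩
  · rintro ⟨γ, rfl⟩; exact ⟨γ.symm, (key _ _ γ).symm⟩

end aux

/-- key algebraic lemma -/
lemma four_point_key (xy xw xz yw yz wz : ℝ)
    (h1 : min xw yw ≤ xy) (h2 : min xz yz ≤ xy)
    (h3 : min yw yz ≤ wz) (h4 : min xw xz ≤ wz) :
    min (xw + yz) (xz + yw) ≤ xy + wz := by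
  rcases min_le_iff.1 h1 with h | h <;> rcases min_le_iff.1 h2 with h' | h' <;>
    rcases min_le_iff.1 h3 with h'' | h'' <;> rcases min_le_iff.1 h4 with h''' | h''' <;>
    rw [min_le_iff] <;> by_contra hc <;> push_neg at hc <;>
    obtain ⟨hc1, hc2⟩ := hc <;> linarith

/-- The Gromov product `g_p(x,x') = (d(p,x) + d(p,x') - d(x,x'))/2`. -/
noncomputable def gromovProd {X : Type*} [MetricSpace X] (p x x' : X) : ℝ :=
  (dist p x + dist p x' - dist x x') / 2

/-- The tree pseudometric `t_p(x,x') = d(p,x) + d(p,x') - 2·m_p(x,x')`. -/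
noncomputable def tFn {X : Type*} [MetricSpace X] (p x x' : X) : ℝ :=
  dist p x + dist p x' - 2 * mFn p x x'

section main
variable {X : Type*} [MetricSpace X]

lemma mSet_nonempty (hX : IsGeodesicSpace X) (p : X) (x x' : X) : {m | ∃ γ : Path x x', m = pathMin p γ}.Nonempty := by
  obtain ⟨γ, -⟩ := hX x x'
  exact ⟨_, γ, rfl⟩

lemma gromov_le_mFn (hX : IsGeodesicSpace X) (p : X) (x x' : X) : gromovProd p x x' ≤ mFn p x x' := by
  obtain ⟨γ, hγ⟩ := hX x x'
  refine le_trans ?_ (pathMin_le_mFn p γ)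
  refine le_csInf (Set.range_nonempty _) ?_
  rintro _ ⟨t, rfl⟩
  have h0 := hγ 0 t
  have h1 := hγ t 1
  rw [γ.source] at h0
  rw [γ.target] at h1
  have ht0 : (0 : ℝ) ≤ (t : ℝ) := t.2.1
  have ht1 : (t : ℝ) ≤ 1 := t.2.2
  have e0 : |((0 : unitInterval) : ℝ) - (t : ℝ)| = (t : ℝ) := by
    simp [abs_of_nonpos, ht0]
  have c1 : ((1 : unitInterval) : ℝ) = 1 := rfl
  have e1 : |(t : ℝ) - ((1 : unitInterval) : ℝ)| = 1 - (t : ℝ) := by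
    rw [c1, abs_of_nonpos (by linarith)]; ring
  rw [e0] at h0
  rw [e1] at h1
  have d1 : dist p x ≤ dist p (γ t) + dist (γ t) x := dist_triangle _ _ _
  have d2 : dist p x' ≤ dist p (γ t) + dist (γ t) x' := dist_triangle _ _ _
  have d3 : dist (γ t) x = (t : ℝ) * dist x x' := by rw [dist_comm]; exact h0
  have d4 : dist (γ t) x' = (1 - (t : ℝ)) * dist x x' := h1
  rw [gromovProd]
  nlinarith [dist_nonneg (x := x) (y := x')]

lemma mFn_nonneg (hX : IsGeodesicSpace X) (p : X) (x x' : X) : 0 ≤ mFn p x x' := by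
  obtain ⟨γ, -⟩ := hX x x'
  exact le_trans (pathMin_nonneg p γ) (pathMin_le_mFn p γ)

lemma mFn_self (p : X) (x : X) : mFn p x x = dist p x := by
  refine le_antisymm (mFn_le_left p x x ⟨Path.refl x⟩) ?_
  refine le_trans ?_ (pathMin_le_mFn p (Path.refl x))
  rw [pathMin_eq, Path.refl_range]
  simp

lemma mFn_base (hX : IsGeodesicSpace X) (p : X) (x : X) : mFn p p x = 0 := by
  refine le_antisymm ?_ (mFn_nonneg hX p p x)
  refine csSup_le (mSet_nonempty hX p p x) ?_
  rintro _ ⟨γ, rfl⟩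
  simpa using pathMin_le_left p γ

lemma mFn_ultra (hX : IsGeodesicSpace X) (p : X) (x y z : X) : min (mFn p x y) (mFn p y z) ≤ mFn p x z := by
  -- first: for individual paths
  have step : ∀ (γ₁ : Path x y) (γ₂ : Path y z),
      min (pathMin p γ₁) (pathMin p γ₂) ≤ mFn p x z := by
    intro γ₁ γ₂
    refine le_trans ?_ (pathMin_le_mFn p (γ₁.trans γ₂))
    rw [pathMin_eq p (γ₁.trans γ₂)]
    refine le_csInf ((Set.range_nonempty _).image _) ?_
    rintro _ ⟨w, hw, rfl⟩
    rw [Path.trans_range] at hw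
    rcases hw with ⟨s, rfl⟩ | ⟨s, rfl⟩
    · exact le_trans (min_le_left _ _) (pathMin_le p γ₁ s)
    · exact le_trans (min_le_right _ _) (pathMin_le p γ₂ s)
  rcases le_total (mFn p x y) (mFn p y z) with h | h
  · rw [min_eq_left h]
    refine csSup_le (mSet_nonempty hX p x y) ?_
    rintro _ ⟨γ₁, rfl⟩
    refine le_of_forall_pos_le_add ?_
    intro ε hε
    have hlt : pathMin p γ₁ - ε < mFn p y z := by
      have := pathMin_le_mFn p γ₁
      linarith
    obtain ⟨b, ⟨γ₂, rfl⟩, hb⟩ := exists_lt_of_lt_csSup (mSet_nonempty hX p y z) hlt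
    have := step γ₁ γ₂
    rcases le_total (pathMin p γ₁) (pathMin p γ₂) with h' | h' <;>
      [rw [min_eq_left h'] at this; rw [min_eq_right h'] at this] <;> linarith
  · rw [min_eq_right h]
    refine csSup_le (mSet_nonempty hX p y z) ?_
    rintro _ ⟨γ₂, rfl⟩
    refine le_of_forall_pos_le_add ?_
    intro ε hε
    have hlt : pathMin p γ₂ - ε < mFn p x y := by
      have := pathMin_le_mFn p γ₂
      linarith
    obtain ⟨b, ⟨γ₁, rfl⟩, hb⟩ := exists_lt_of_lt_csSup (mSet_nonempty hX p x y) hlt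
    have := step γ₁ γ₂
    rcases le_total (pathMin p γ₁) (pathMin p γ₂) with h' | h' <;>
      [rw [min_eq_left h'] at this; rw [min_eq_right h'] at this] <;> linarith

end main

/-- `t_p` is a pseudometric on `X`, satisfies `t_p ≤ d`,
`t_p(p,x) = d(p,x)`, and is 0-hyperbolic (four-point condition with δ = 0). -/
theorem tFn_pseudometric_zero_hyperbolic {X : Type*} [MetricSpace X]
    (hX : IsGeodesicSpace X) (p : X) :
    (∀ x : X, tFn p x x = 0) ∧
    (∀ x x' : X, 0 ≤ tFn p x x') ∧
    (∀ x x' : X, tFn p x x' = tFn p x' x) ∧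
    (∀ x x' x'' : X, tFn p x x'' ≤ tFn p x x' + tFn p x' x'') ∧
    (∀ x x' : X, tFn p x x' ≤ dist x x') ∧
    (∀ x : X, tFn p p x = dist p x) ∧
    (∀ x y w z : X,
      tFn p x y + tFn p w z ≤ max (tFn p x w + tFn p y z) (tFn p x z + tFn p y w)) := by
  have hpath : ∀ x x' : X, Nonempty (Path x x') := by
    intro x x'; obtain ⟨γ, -⟩ := hX x x'; exact ⟨γ⟩
  have hleft : ∀ x x' : X, mFn p x x' ≤ dist p x := fun x x' => mFn_le_left p x x' (hpath x x')
  have hright : ∀ x x' : X, mFn p x x' ≤ dist p x' := fun x x' => mFn_le_right p x x' (hpath x x')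
  refine ⟨?_, ?_, ?_, ?_, ?_, ?_, ?_⟩
  · intro x; rw [tFn, mFn_self]; ring
  · intro x x'
    have h1 := hleft x x'
    have h2 := hright x x'
    rw [tFn]; rcases le_total (dist p x) (dist p x') with h | h <;> linarith
  · intro x x'; rw [tFn, tFn, mFn_symm]; ring
  · intro x x' x''
    have hu := mFn_ultra hX p x x' x''
    have h1 := hleft x' x''
    rw [tFn, tFn, tFn]
    have h2 := hright x x'
    rcases min_le_iff.1 hu with h | h <;> linarith
  · intro x x'
    have := gromov_le_mFn hX p x x'
    rw [gromovProd] at this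
    rw [tFn]; linarith
  · intro x; rw [tFn, mFn_base hX p, dist_self]; ring
  · intro x y w z
    have h1 : min (mFn p x w) (mFn p w y) ≤ mFn p x y := mFn_ultra hX p x w y
    have h2 : min (mFn p x z) (mFn p z y) ≤ mFn p x y := mFn_ultra hX p x z y
    have h3 : min (mFn p y w) (mFn p y z) ≤ mFn p w z := by
      rw [mFn_symm p y w]
      exact mFn_ultra hX p w y z
    have h4 : min (mFn p x w) (mFn p x z) ≤ mFn p w z := by
      rw [mFn_symm p x w]
      exact mFn_ultra hX p w x z
    rw [mFn_symm p w y] at h1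
    rw [mFn_symm p z y] at h2
    have key := four_point_key (mFn p x y) (mFn p x w) (mFn p x z) (mFn p y w) (mFn p y z)
      (mFn p w z) h1 h2 h3 h4
    rw [le_max_iff]
    rw [tFn, tFn, tFn, tFn, tFn, tFn]
    rcases min_le_iff.1 key with h | h
    · left; linarith
    · right; linarith
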